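/- arXiv:2603.07284 — 5 statements merged into one kernel-verified Lean document; each statement's English description precedes it below -/
import Mathlib

section
/- For every n ≥ 1, the number of derangements satisfies d_n = ∑_{k=1}^{n} (k−1) · C(n,k) · d_{n−k}. -/
/-!
A permutation of an `n`-set is determined by its set of fixed points together with a
derangement of the complement, so `∑ₖ C(n,k) d_{n-k} = n!`. Weighting by `k` and using
`k C(n,k) = n C(n-1,k-1)` gives `∑ₖ k C(n,k) d_{n-k} = n (n-1)! = n!` as well. The difference
of the two sums is the right-hand side of the claim minus `d_n` (the `k = 0` term of the first).
-/

open Finset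

/-- `p n k` : number of permutations of `{1,...,n}` with exactly `k` fixed points. -/
def p (n k : ℕ) : ℕ :=
  Fintype.card {σ : Equiv.Perm (Fin n) // (Finset.univ.filter fun x => σ x = x).card = k}

open Equiv Nat

section
variable {α : Type*} [Fintype α] [DecidableEq α]

theorem card_perm_fixedPoints_eq (s : Finset α) :
    #{σ : Perm α | univ.filter (fun x => σ x = x) = s}
      = numDerangements (Fintype.card α - #s) := by
  rw [← Fintype.card_subtype]
  have hfixed : {σ : Perm α // univ.filter (fun x => σ x = x) = s}
      ≃ {σ : Perm α // ∀ a, ¬(a ∉ s) ↔ a ∈ Function.fixedPoints σ} :=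
    Equiv.subtypeEquivRight fun σ => by
      simp only [Finset.ext_iff, mem_filter, mem_univ, true_and, Function.mem_fixedPoints,
        Function.IsFixedPt, not_not]
      exact forall_congr' fun a => Iff.comm
  rw [Fintype.card_congr (hfixed.trans (derangements.subtypeEquiv (· ∉ s)).symm),
    card_derangements_eq_numDerangements, Fintype.card_subtype_compl, Fintype.card_coe]

theorem sum_choose_mul_numDerangements_card :
    ∑ k ∈ range (Fintype.card α + 1), (Fintype.card α).choose k
      * numDerangements (Fintype.card α - k) = (Fintype.card α)! := by
  have hsubsets := sum_powerset_apply_card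
    (fun k => numDerangements (Fintype.card α - k)) (x := (univ : Finset α))
  rw [powerset_univ, Finset.card_univ] at hsubsets
  simp only [smul_eq_mul] at hsubsets
  rw [← hsubsets, ← Fintype.card_perm, ← Finset.card_univ (α := Perm α),
    card_eq_sum_card_fiberwise (f := fun σ : Perm α => univ.filter (fun x => σ x = x)) (t := univ)
      (by simp)]
  simp only [card_perm_fixedPoints_eq]

end

theorem sum_choose_mul_numDerangements (n : ℕ) :
    ∑ k ∈ range (n + 1), n.choose k * numDerangements (n - k) = n ! := by
  simpa using sum_choose_mul_numDerangements_card (α := Fin n)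

theorem sum_mul_choose_mul_numDerangements (n : ℕ) :
    ∑ k ∈ range (n + 1), k * n.choose k * numDerangements (n - k) = n * (n - 1)! := by
  cases n with
  | zero => simp
  | succ n =>
    rw [sum_range_succ', zero_mul, zero_mul, add_zero, add_tsub_cancel_right,
      ← sum_choose_mul_numDerangements, mul_sum]
    refine sum_congr rfl fun k _ => ?_
    rw [mul_comm (k + 1), ← add_one_mul_choose_eq, Nat.add_sub_add_right, mul_assoc]

theorem p_zero_eq_numDerangements (n : ℕ) : p n 0 = numDerangements n := by
  have hcard := card_derangements_eq_numDerangements (Fin n)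
  rw [Fintype.card_fin] at hcard
  rw [p, ← hcard]
  refine Fintype.card_congr (Equiv.subtypeEquivRight fun σ => ?_)
  simp [filter_eq_empty_iff, derangements]

theorem stmt3 (n : ℕ) (hn : 1 ≤ n) :
    p n 0 = ∑ k ∈ Finset.Icc 1 n, (k - 1) * n.choose k * p (n - k) 0 := by
  simp only [p_zero_eq_numDerangements]
  have hsplit (f : ℕ → ℕ) : ∑ k ∈ range (n + 1), f k = f 0 + ∑ k ∈ Icc 1 n, f k := by
    rw [Nat.range_succ_eq_Icc_zero, ← sum_Ioc_add_eq_sum_Icc (Nat.zero_le n), add_comm]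
    rfl
  have htotal := sum_choose_mul_numDerangements n
  have hweighted := sum_mul_choose_mul_numDerangements n
  rw [hsplit] at htotal hweighted
  rw [Nat.mul_factorial_pred (by omega)] at hweighted
  have hpred : ∑ k ∈ Icc 1 n, (k - 1) * n.choose k * numDerangements (n - k)
      + ∑ k ∈ Icc 1 n, n.choose k * numDerangements (n - k)
      = ∑ k ∈ Icc 1 n, k * n.choose k * numDerangements (n - k) := by
    rw [← sum_add_distrib]
    refine sum_congr rfl fun k hk => ?_
    obtain ⟨j, rfl⟩ : ∃ j, k = j + 1 := ⟨k - 1, by have := (mem_Icc.1 hk).1; omega⟩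
    simp only [add_tsub_cancel_right]
    ring
  simp only [choose_zero_right, tsub_zero, one_mul, zero_mul, zero_add] at htotal hweighted
  omega
end

section
/- For all natural numbers q and n with n ≥ q, the Bell number satisfies n! · B_q = ∑_{j=0}^{n} j^q · p_n(j). -/
/-- Bell number: number of partitions of a set with `q` elements. -/
def Bell (q : ℕ) : ℕ := Fintype.card (Finpartition (Finset.univ : Finset (Fin q)))

open Finset
open scoped Nat
open Function

/-!
Both sides count the pairs `(σ, f)` of a permutation `σ` of `Fin n` and a map
`f : Fin q → Fin n` whose image `σ` fixes pointwise. Grouped by `σ`, they number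
`∑ σ, #(fix σ) ^ q = ∑ j, j ^ q * p n j`. Grouped by `f`, they number `∑ f, (n - #(range f))!`.
The maps `f` whose kernel is a given partition `P` of `Fin q` are the injections of the blocks
of `P` into `Fin n`, so they contribute `n.descFactorial #P * (n - #P)! = n!`, as `#P ≤ q ≤ n`;
the total is therefore `n! * Bell q`.
-/

section FixedPoints

variable {α ι : Type*} [Fintype α] [DecidableEq α] [Fintype ι] [DecidableEq ι]

lemma card_perm_fixing_pointwise (s : Finset α) :
    #{σ : Equiv.Perm α | ∀ x ∈ s, σ x = x} = (Fintype.card α - #s)! := by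
  have hfix : ∀ σ : Equiv.Perm α, (∀ x ∈ s, σ x = x) ↔ ∀ x, ¬ x ∈ sᶜ → σ x = x := by
    simp
  rw [filter_congr fun σ _ => hfix σ, ← Fintype.card_subtype,
    ← Fintype.card_congr (Equiv.Perm.subtypeEquivSubtypePerm (· ∈ sᶜ)), Fintype.card_perm,
    Fintype.card_subtype, filter_univ_mem, card_compl]

lemma card_fixedPoints_pow (σ : Equiv.Perm α) :
    #{x | σ x = x} ^ Fintype.card ι = #{f : ι → α | ∀ i, σ (f i) = f i} := by
  have hpi : ({f : ι → α | ∀ i, σ (f i) = f i} : Finset (ι → α))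
      = Fintype.piFinset fun _ => {x | σ x = x} := by
    ext f
    simp [Fintype.mem_piFinset]
  rw [hpi, Fintype.card_piFinset, prod_const, Finset.card_univ]

lemma sum_card_fixedPoints_pow :
    ∑ σ : Equiv.Perm α, #{x | σ x = x} ^ Fintype.card ι
      = ∑ f : ι → α, (Fintype.card α - #(univ.image f))! := by
  calc ∑ σ : Equiv.Perm α, #{x | σ x = x} ^ Fintype.card ι
      = ∑ σ : Equiv.Perm α, #{f : ι → α | ∀ i, σ (f i) = f i} := by
        simp only [card_fixedPoints_pow]
    _ = ∑ f : ι → α, #{σ : Equiv.Perm α | ∀ i, σ (f i) = f i} := by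
        simp only [card_filter]
        exact sum_comm
    _ = ∑ f : ι → α, (Fintype.card α - #(univ.image f))! := by
        refine sum_congr rfl fun f _ => ?_
        rw [← card_perm_fixing_pointwise]
        simp

end FixedPoints

section Kernel

variable {ι κ α : Type*}

lemma exists_embedding_comp_eq_of_ker {π : ι → κ} (hπ : Surjective π) {f : ι → α}
    (hf : ∀ a b, f a = f b ↔ π a = π b) : ∃ g : κ ↪ α, ⇑g ∘ π = f := by
  refine ⟨⟨f ∘ surjInv hπ, fun c d hcd => ?_⟩, funext fun a => ?_⟩
  · rwa [comp_apply, comp_apply, hf, surjInv_eq hπ, surjInv_eq hπ] at hcd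
  · exact (hf _ _).2 (surjInv_eq hπ _)

lemma card_filter_ker_eq_card_embedding [Fintype ι] [DecidableEq ι] [Fintype κ] [DecidableEq κ]
    [Fintype α] [DecidableEq α] {π : ι → κ} (hπ : Surjective π) :
    #{f : ι → α | ∀ a b, f a = f b ↔ π a = π b} = Fintype.card (κ ↪ α) := by
  have himage : ({f : ι → α | ∀ a b, f a = f b ↔ π a = π b} : Finset (ι → α))
      = univ.image fun g : κ ↪ α => ⇑g ∘ π := by
    ext f
    simp only [mem_filter, mem_univ, true_and, mem_image]
    constructor
    · exact exists_embedding_comp_eq_of_ker hπ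
    · rintro ⟨g, -, rfl⟩ a b
      exact g.injective.eq_iff
  rw [himage, Finset.card_image_of_injective _
    fun g g' h => DFunLike.coe_injective (hπ.injective_comp_right h), Finset.card_univ]

lemma card_image_of_ker [Fintype ι] [Fintype κ] [DecidableEq κ] [DecidableEq α] {π : ι → κ}
    (hπ : Surjective π) {f : ι → α} (hf : ∀ a b, f a = f b ↔ π a = π b) :
    #(univ.image f) = Fintype.card κ := by
  obtain ⟨g, rfl⟩ := exists_embedding_comp_eq_of_ker hπ hf
  rw [← image_image, image_univ_of_surjective hπ, Finset.card_image_of_injective _ g.injective,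
    Finset.card_univ]

end Kernel

namespace Finpartition

variable {ι α : Type*} [DecidableEq ι]

lemma ext_part {s : Finset ι} {P Q : Finpartition s} (h : ∀ a ∈ s, P.part a = Q.part a) :
    P = Q := by
  ext t
  constructor
  · intro ht
    obtain ⟨a, ha, rfl⟩ := P.part_surjOn ht
    exact h a ha ▸ Q.part_mem.2 ha
  · intro ht
    obtain ⟨a, ha, rfl⟩ := Q.part_surjOn ht
    exact (h a ha).symm ▸ P.part_mem.2 ha

variable [Fintype ι]

def toParts (P : Finpartition (univ : Finset ι)) (a : ι) : P.parts :=
  ⟨P.part a, P.part_mem.2 (mem_univ a)⟩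

lemma toParts_surjective (P : Finpartition (univ : Finset ι)) : Surjective P.toParts := by
  rintro ⟨t, ht⟩
  obtain ⟨a, -, rfl⟩ := P.part_surjOn ht
  exact ⟨a, rfl⟩

open Classical in
noncomputable def ker (f : ι → α) : Finpartition (univ : Finset ι) :=
  ofSetoid (Setoid.ker f)

lemma ker_eq_iff {f : ι → α} {P : Finpartition (univ : Finset ι)} :
    ker f = P ↔ ∀ a b, f a = f b ↔ P.toParts a = P.toParts b := by
  have hker : ∀ a b, b ∈ (ker f).part a ↔ f a = f b := fun a b => by
    classical
    rw [ker, mem_part_ofSetoid_iff_rel]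
    exact Iff.rfl
  simp only [toParts, Subtype.mk.injEq]
  constructor
  · rintro rfl a b
    rw [← hker, (ker f).mem_part_iff_part_eq_part (mem_univ b) (mem_univ a), eq_comm]
  · refine fun h => ext_part fun a _ => ?_
    ext b
    rw [hker, h, P.mem_part_iff_part_eq_part (mem_univ b) (mem_univ a), eq_comm]

end Finpartition

section KernelFibres

variable {ι α : Type*} [Fintype ι] [DecidableEq ι] [Fintype α] [DecidableEq α]

lemma sum_filter_ker_eq_factorial_sub_card_image (P : Finpartition (univ : Finset ι))
    (hP : #P.parts ≤ Fintype.card α) :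
    ∑ f ∈ {f : ι → α | Finpartition.ker f = P}, (Fintype.card α - #(univ.image f))!
      = (Fintype.card α)! := by
  have hfib := fun f : ι → α => Finpartition.ker_eq_iff (f := f) (P := P)
  calc ∑ f ∈ {f : ι → α | Finpartition.ker f = P}, (Fintype.card α - #(univ.image f))!
      = ∑ f ∈ {f : ι → α | Finpartition.ker f = P}, (Fintype.card α - #P.parts)! := by
        refine sum_congr rfl fun f hf => ?_
        rw [card_image_of_ker P.toParts_surjective ((hfib f).1 (mem_filter.1 hf).2),
          Fintype.card_coe]
    _ = (Fintype.card α)! := by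
        rw [sum_const, smul_eq_mul, filter_congr fun f _ => hfib f,
          card_filter_ker_eq_card_embedding P.toParts_surjective, Fintype.card_embedding_eq,
          Fintype.card_coe, mul_comm, Nat.factorial_mul_descFactorial hP]

lemma sum_factorial_sub_card_image (h : Fintype.card ι ≤ Fintype.card α) :
    ∑ f : ι → α, (Fintype.card α - #(univ.image f))!
      = (Fintype.card α)! * Fintype.card (Finpartition (univ : Finset ι)) := by
  have hparts (P : Finpartition (univ : Finset ι)) : #P.parts ≤ Fintype.card α :=
    P.card_parts_le_card.trans (by simpa using h)
  rw [← sum_fiberwise_of_maps_to (g := Finpartition.ker) (t := univ) (fun f _ => mem_univ _),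
    sum_congr rfl fun P _ => sum_filter_ker_eq_factorial_sub_card_image P (hparts P), sum_const,
    smul_eq_mul, Finset.card_univ, mul_comm]

end KernelFibres

lemma sum_mul_p (n : ℕ) (w : ℕ → ℕ) :
    ∑ j ∈ range (n + 1), w j * p n j = ∑ σ : Equiv.Perm (Fin n), w #{x | σ x = x} := by
  have hmaps : ∀ σ ∈ (univ : Finset (Equiv.Perm (Fin n))), #{x | σ x = x} ∈ range (n + 1) :=
    fun σ _ => mem_range_succ_iff.2 ((card_filter_le _ _).trans_eq (card_fin n))
  rw [← sum_fiberwise_of_maps_to hmaps]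
  refine sum_congr rfl fun j _ => ?_
  rw [p, Fintype.card_subtype, mul_comm,
    sum_const_nat fun σ hσ => congrArg w (mem_filter.1 hσ).2]

theorem stmt8 (q n : ℕ) (h : q ≤ n) :
    n.factorial * Bell q = ∑ j ∈ Finset.range (n + 1), j ^ q * p n j := by
  calc n ! * Bell q = ∑ f : Fin q → Fin n, (n - #(univ.image f))! := by
        simpa [Bell] using
          (sum_factorial_sub_card_image (ι := Fin q) (α := Fin n) (by simpa)).symm
    _ = ∑ σ : Equiv.Perm (Fin n), #{x | σ x = x} ^ q := by
        simpa using (sum_card_fixedPoints_pow (α := Fin n) (ι := Fin q)).symm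
    _ = ∑ j ∈ range (n + 1), j ^ q * p n j := (sum_mul_p n (· ^ q)).symm
end

section
/- For all integers n, r with 0 ≤ r ≤ n−2, ∑_{k=0}^{n} k(k−1)(k−2)⋯(k−r) · p_n(k) = n!, i.e., ∑_{k=0}^{n} (k)_{r+1} · p_n(k) = n!, where (k)_{r+1} is the falling factorial with r+1 factors. -/
/-!
The falling factorial `(k)_m` counts ordered `m`-tuples of distinct fixed points of a permutation
with `k` fixed points, so the sum counts pairs `(σ, t)` of a permutation `σ` and an injective
`m`-tuple `t` fixed pointwise by `σ`. Counting the other way round, each of the `(n)_m` tuples is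
fixed by the `(n - m)!` permutations of its complement, and `(n)_m (n - m)! = n!` once `m ≤ n`.
-/

open Finset

section FixedPoints

variable {α ι : Type*} [Fintype α] [DecidableEq α] [Fintype ι]

def sigmaEmbeddingFixedPointsEquiv :
    (Σ σ : Equiv.Perm α, (ι ↪ {x // σ x = x})) ≃
      (Σ f : ι ↪ α, {σ : Equiv.Perm α // ∀ i, σ (f i) = f i}) where
  toFun x := ⟨x.2.trans (Function.Embedding.subtype _), x.1, fun i => (x.2 i).2⟩
  invFun x := ⟨x.2.1, ⟨fun i => ⟨x.1 i, x.2.2 i⟩,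
    fun _ _ h => x.1.injective (congrArg Subtype.val h)⟩⟩
  left_inv _ := rfl
  right_inv _ := rfl

theorem card_perm_fixing_embedding (f : ι ↪ α) :
    Fintype.card {σ : Equiv.Perm α // ∀ i, σ (f i) = f i} =
      (Fintype.card α - Fintype.card ι).factorial := by
  have fixing_iff (σ : Equiv.Perm α) :
      (∀ i, σ (f i) = f i) ↔ ∀ a, ¬ a ∉ Set.range f → σ a = a := by
    simp only [Set.mem_range, not_not, forall_exists_index, forall_apply_eq_imp_iff]
  rw [Fintype.card_congr ((Equiv.subtypeEquivRight fixing_iff).trans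
      (Equiv.Perm.subtypeEquivSubtypePerm _).symm),
    Fintype.card_perm, Fintype.card_subtype_compl, Set.card_range_of_injective f.injective]

theorem sum_card_embedding_fixedPoints :
    ∑ σ : Equiv.Perm α, Fintype.card (ι ↪ {x // σ x = x}) =
      (Fintype.card α).descFactorial (Fintype.card ι) *
        (Fintype.card α - Fintype.card ι).factorial := by
  rw [← Fintype.card_sigma, Fintype.card_congr sigmaEmbeddingFixedPointsEquiv,
    Fintype.card_sigma]
  simp only [card_perm_fixing_embedding, sum_const, card_univ, smul_eq_mul,
    Fintype.card_embedding_eq]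

theorem sum_descFactorial_card_fixedPoints {m : ℕ} (hm : m ≤ Fintype.card α) :
    ∑ σ : Equiv.Perm α, (univ.filter fun x => σ x = x).card.descFactorial m =
      (Fintype.card α).factorial := by
  have h := sum_card_embedding_fixedPoints (α := α) (ι := Fin m)
  simp only [Fintype.card_embedding_eq, Fintype.card_subtype, Fintype.card_fin] at h
  rw [h, mul_comm, Nat.factorial_mul_descFactorial hm]

end FixedPoints

theorem sum_mul_p_eq_sum_perm (n : ℕ) (f : ℕ → ℕ) :
    ∑ k ∈ range (n + 1), f k * p n k =
      ∑ σ : Equiv.Perm (Fin n), f (univ.filter fun x => σ x = x).card := by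
  rw [← sum_fiberwise_of_maps_to (t := range (n + 1))
    (g := fun σ : Equiv.Perm (Fin n) => (univ.filter fun x => σ x = x).card)
    fun σ _ => mem_range_succ_iff.mpr ((card_filter_le _ _).trans_eq (card_fin n))]
  refine sum_congr rfl fun k _ => ?_
  rw [sum_congr rfl fun σ hσ => congrArg f (mem_filter.mp hσ).2, sum_const, smul_eq_mul,
    p, Fintype.card_subtype, mul_comm]

theorem stmt12 (n r : ℕ) (hr : r + 2 ≤ n) :
    ∑ k ∈ Finset.range (n + 1), k.descFactorial (r + 1) * p n k = n.factorial := by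
  rw [sum_mul_p_eq_sum_perm, sum_descFactorial_card_fixedPoints (by rw [Fintype.card_fin]; omega),
    Fintype.card_fin]
end

section
/- For all positive integers k and all natural numbers i, k^i = ∑_{l=0}^{⌊(k−1)i/k⌋} (−1)^l · C(i,l) · C(k(i−l), i). -/
/-!
`(1 + X) ^ k - X ^ k` has degree `k - 1` and leading coefficient `k`, so `k ^ i` is the
coefficient of `X ^ ((k - 1) * i)` in its `i`-th power. Expanding that power binomially in
`-X ^ k` and `(1 + X) ^ k`, the `l`-th term contributes `C(k (i - l), (k - 1) i - k l)`, which is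
nonzero only for `k l ≤ (k - 1) i`, i.e. `l ≤ ⌊(k - 1) i / k⌋`, and equals `C(k (i - l), i)`.
-/

open Polynomial Finset

namespace Polynomial

variable (R : Type*) [CommRing R]

theorem coeff_one_add_X_pow_sub_X_pow (k m : ℕ) :
    ((1 + X) ^ k - X ^ k : R[X]).coeff m = if m < k then (k.choose m : R) else 0 := by
  rw [coeff_sub, coeff_one_add_X_pow, coeff_X_pow]
  rcases lt_trichotomy m k with h | rfl | h
  · simp [h, h.ne]
  · simp
  · simp [h.ne', not_lt.2 h.le, Nat.choose_eq_zero_of_lt h]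

theorem natDegree_one_add_X_pow_sub_X_pow_le (k : ℕ) :
    ((1 + X) ^ k - X ^ k : R[X]).natDegree ≤ k - 1 :=
  natDegree_le_iff_coeff_eq_zero.2 fun m hm ↦ by
    rw [coeff_one_add_X_pow_sub_X_pow, if_neg (by omega)]

theorem coeff_one_add_X_pow_sub_X_pow_pow_pred_mul {k : ℕ} (hk : 0 < k) (i : ℕ) :
    (((1 + X) ^ k - X ^ k : R[X]) ^ i).coeff ((k - 1) * i) = (k : R) ^ i := by
  rw [mul_comm, coeff_pow_of_natDegree_le (natDegree_one_add_X_pow_sub_X_pow_le R k),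
    coeff_one_add_X_pow_sub_X_pow, if_pos (by omega),
    Nat.choose_symm_of_eq_add (by omega : k = k - 1 + 1), Nat.choose_one_right]

theorem coeff_one_add_X_pow_sub_X_pow_pow (k i n : ℕ) :
    (((1 + X) ^ k - X ^ k : R[X]) ^ i).coeff n =
      ∑ l ∈ range (i + 1) with k * l ≤ n,
        (-1 : R) ^ l * i.choose l * ((k * (i - l)).choose (n - k * l) : R) := by
  rw [sub_eq_neg_add, add_pow, finsetSum_coeff, sum_filter]
  refine sum_congr rfl fun l _ ↦ ?_
  have hterm : (-X ^ k : R[X]) ^ l * ((1 + X) ^ k) ^ (i - l) * (i.choose l : R[X]) =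
      C ((-1 : R) ^ l * i.choose l) * ((1 + X) ^ (k * (i - l)) * X ^ (k * l)) := by
    rw [C_mul, C_pow, C_neg, C_1, ← map_natCast C]
    ring
  rw [hterm, coeff_C_mul, coeff_mul_X_pow', coeff_one_add_X_pow]
  split_ifs <;> simp

end Polynomial

theorem Finset.range_filter_mul_le_pred_mul {k : ℕ} (hk : 0 < k) (i : ℕ) :
    {l ∈ range (i + 1) | k * l ≤ (k - 1) * i} = range ((k - 1) * i / k + 1) := by
  ext l
  simp only [mem_filter, mem_range, Nat.lt_succ_iff, Nat.le_div_iff_mul_le hk]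
  constructor
  · rintro ⟨-, h⟩
    linarith
  · intro h
    refine ⟨?_, by linarith⟩
    have hle : k * l ≤ k * i := by
      rw [mul_comm]
      exact h.trans (Nat.mul_le_mul_right i (k.sub_le 1))
    exact Nat.le_of_mul_le_mul_left hle hk

theorem stmt17 (k i : ℕ) (hk : 0 < k) :
    (k : ℤ) ^ i = ∑ l ∈ Finset.range ((k - 1) * i / k + 1),
      (-1 : ℤ) ^ l * i.choose l * ((k * (i - l)).choose i) := by
  rw [← coeff_one_add_X_pow_sub_X_pow_pow_pred_mul ℤ hk, coeff_one_add_X_pow_sub_X_pow_pow,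
    ← range_filter_mul_le_pred_mul hk]
  refine sum_congr rfl fun l hl ↦ ?_
  obtain ⟨hli, hkl⟩ : l < i + 1 ∧ k * l ≤ (k - 1) * i := by simpa using hl
  have hk1 : 1 ≤ k := hk
  have hsplit : k * (i - l) = ((k - 1) * i - k * l) + i := by
    zify [hkl, hk1, Nat.lt_succ_iff.1 hli]
    ring
  rw [Nat.choose_symm_of_eq_add hsplit]
end

section
/- For every natural number i and every natural number k, k^i = ∑_{j=0}^{i} A(i,j) · C(k+j, i), where A(i,j) are the Eulerian numbers (Worpitzky's identity). -/
/-!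
Each `f : Fin n → Fin k` is sorted by a unique permutation `σ = Tuple.sort f`, characterised by
`t ↦ (f (σ t), σ t)` being strictly increasing lexicographically: `g = f ∘ σ` is weakly increasing
and strictly increasing at the descents of `σ`. Adding to `g t` the number of ascents of `σ`
before `t` turns these `g` bijectively into the strictly increasing maps
`Fin n → Fin (k + asc σ)`, of which there are `(k + asc σ).choose n`. Summing over `σ` and
grouping by `asc σ` gives the identity.
-/

/-- Eulerian number `A i j`: number of permutations of `{1,...,i}` with exactly `j` ascents. -/
def A (i j : ℕ) : ℕ :=
  Fintype.card {σ : Equiv.Perm (Fin i) //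
    (Finset.univ.filter fun x : Fin i =>
      (x : ℕ) + 1 < i ∧ σ x < σ ⟨((x : ℕ) + 1) % i, Nat.mod_lt _ x.pos⟩).card = j}

open Finset

namespace Fin

variable {n : ℕ}

theorem strictMono_iff_lt_of_add_one_lt {α : Type*} [Preorder α] {f : Fin n → α} :
    StrictMono f ↔ ∀ (t : ℕ) (h : t + 1 < n), f ⟨t, by omega⟩ < f ⟨t + 1, h⟩ := by
  cases n with
  | zero => simp [Subsingleton.strictMono]
  | succ n =>
    rw [Fin.strictMono_iff_lt_succ]
    exact ⟨fun h t ht => h ⟨t, by omega⟩, fun h t => h t (by omega)⟩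

theorem val_le_of_strictMono {f : Fin n → ℕ} (hf : StrictMono f) (t : Fin n) : (t : ℕ) ≤ f t := by
  obtain ⟨t, ht⟩ := t
  induction t with
  | zero => exact Nat.zero_le _
  | succ t ih => exact (ih (by omega)).trans_lt (hf (Fin.mk_lt_mk.2 t.lt_succ_self))

theorem strictMono_toLex_val_iff {ι β : Type*} [Preorder ι] [Preorder β] {k : ℕ} (g : ι → Fin k)
    (h : ι → β) :
    StrictMono (fun t => toLex ((g t : ℕ), h t)) ↔ StrictMono (fun t => toLex (g t, h t)) := by
  simp only [StrictMono, Prod.Lex.toLex_lt_toLex, Fin.val_fin_lt, Fin.val_inj]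

end Fin

theorem Tuple.sort_eq_iff_strictMono_toLex {n : ℕ} {α : Type*} [LinearOrder α] (f : Fin n → α)
    (σ : Equiv.Perm (Fin n)) :
    Tuple.sort f = σ ↔ StrictMono fun t => toLex (f (σ t), σ t) := by
  rw [eq_comm, Tuple.eq_sort_iff']
  rfl

namespace Equiv.Perm

variable {n : ℕ} (σ : Perm (Fin n))

def IsAscentAt (t : ℕ) : Prop :=
  ∃ h : t + 1 < n, σ ⟨t, by omega⟩ < σ ⟨t + 1, h⟩

instance : DecidablePred σ.IsAscentAt := fun _ => inferInstanceAs (Decidable (∃ _ : _, _))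

def ascentsBelow (t : ℕ) : ℕ := #{s ∈ range t | σ.IsAscentAt s}

theorem ascentsBelow_succ (t : ℕ) :
    σ.ascentsBelow (t + 1) = σ.ascentsBelow t + if σ.IsAscentAt t then 1 else 0 := by
  rw [ascentsBelow, ascentsBelow, range_add_one, filter_insert]
  split_ifs
  · exact card_insert_of_notMem (by simp)
  · rfl

theorem ascentsBelow_le (t : ℕ) : σ.ascentsBelow t ≤ t :=
  (card_filter_le _ _).trans (card_range t).le

theorem ascentsBelow_mono : Monotone σ.ascentsBelow := fun _ _ h =>
  card_le_card (filter_subset_filter _ (range_subset_range.2 h))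

theorem ascentsBelow_sub_one : σ.ascentsBelow (n - 1) = σ.ascentsBelow n := by
  rcases n with _ | n
  · rfl
  · simp [ascentsBelow_succ, IsAscentAt]

theorem ascentsBelow_le_of_strictMono {d : Fin n → ℕ} (hd : StrictMono d) (t : Fin n) :
    σ.ascentsBelow t ≤ d t :=
  (σ.ascentsBelow_le t).trans (Fin.val_le_of_strictMono hd t)

theorem toLex_lt_toLex_succ_iff (g : Fin n → ℕ) (t : ℕ) (h : t + 1 < n) :
    toLex (g ⟨t, by omega⟩, σ ⟨t, by omega⟩) < toLex (g ⟨t + 1, h⟩, σ ⟨t + 1, h⟩) ↔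
      g ⟨t, by omega⟩ + σ.ascentsBelow t < g ⟨t + 1, h⟩ + σ.ascentsBelow (t + 1) := by
  rw [Prod.Lex.toLex_lt_toLex, ascentsBelow_succ]
  by_cases hasc : σ.IsAscentAt t
  · have : σ ⟨t, by omega⟩ < σ ⟨t + 1, h⟩ := hasc.2
    simp only [hasc, this, if_true, and_true, ← le_iff_lt_or_eq]
    omega
  · have : ¬ σ ⟨t, by omega⟩ < σ ⟨t + 1, h⟩ := fun h' => hasc ⟨h, h'⟩
    simp only [hasc, this, if_false, and_false, or_false]
    omega

theorem strictMono_toLex_iff_add_ascentsBelow (g : Fin n → ℕ) :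
    StrictMono (fun t => toLex (g t, σ t)) ↔ StrictMono (fun t => g t + σ.ascentsBelow t) := by
  simp only [Fin.strictMono_iff_lt_of_add_one_lt, σ.toLex_lt_toLex_succ_iff]

def sortFiberEquiv (k : ℕ) :
    {f : Fin n → Fin k // Tuple.sort f = σ} ≃
      {g : Fin n → Fin k // StrictMono fun t => toLex ((g t : ℕ), σ t)} :=
  (σ.symm.arrowCongr (Equiv.refl _)).subtypeEquiv fun f => by
    simp [Tuple.sort_eq_iff_strictMono_toLex, Fin.strictMono_toLex_val_iff]

theorem strictMono_toLex_sub_ascentsBelow {d : Fin n → ℕ} (hd : StrictMono d) :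
    StrictMono fun t => toLex (d t - σ.ascentsBelow t, σ t) := by
  rw [strictMono_toLex_iff_add_ascentsBelow]
  convert hd using 2 with t
  have := σ.ascentsBelow_le_of_strictMono hd t
  omega

-- `t ↦ d t - σ.ascentsBelow t` is monotone, and the last position is never an ascent.
theorem sub_ascentsBelow_lt {k : ℕ} (d : Fin n ↪o Fin (k + σ.ascentsBelow n)) (t : Fin n) :
    (d t : ℕ) - σ.ascentsBelow t < k := by
  have hd : StrictMono fun t => (d t : ℕ) := d.strictMono
  let last : Fin n := ⟨n - 1, by have := t.2; omega⟩
  have hmono := Prod.Lex.monotone_fst_ofLex.comp (σ.strictMono_toLex_sub_ascentsBelow hd).monotone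
  have hle_last : (d t : ℕ) - σ.ascentsBelow t ≤ d last - σ.ascentsBelow last :=
    hmono (Fin.mk_le_mk.2 (by omega) : t ≤ last)
  have hlast_lt : (d last : ℕ) < k + σ.ascentsBelow last := by
    rw [show (last : ℕ) = n - 1 from rfl, σ.ascentsBelow_sub_one]
    exact (d last).2
  have hascents_le := σ.ascentsBelow_le_of_strictMono hd last
  omega

def addAscentsBelowEquiv (k : ℕ) :
    {g : Fin n → Fin k // StrictMono fun t => toLex ((g t : ℕ), σ t)} ≃
      (Fin n ↪o Fin (k + σ.ascentsBelow n)) where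
  toFun g := OrderEmbedding.ofStrictMono
    (fun t => ⟨g.1 t + σ.ascentsBelow t, by
      have := σ.ascentsBelow_mono (t.2.le)
      have := (g.1 t).2
      omega⟩)
    ((σ.strictMono_toLex_iff_add_ascentsBelow _).1 g.2)
  invFun d := ⟨fun t => ⟨d t - σ.ascentsBelow t, σ.sub_ascentsBelow_lt d t⟩,
    σ.strictMono_toLex_sub_ascentsBelow d.strictMono⟩
  left_inv g := by ext t; exact Nat.add_sub_cancel _ _
  right_inv d := by
    ext t
    exact Nat.sub_add_cancel (σ.ascentsBelow_le_of_strictMono d.strictMono t)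

theorem card_sort_fiber (k : ℕ) :
    Nat.card {f : Fin n → Fin k // Tuple.sort f = σ} = (k + σ.ascentsBelow n).choose n := by
  rw [Nat.card_congr ((σ.sortFiberEquiv k).trans ((σ.addAscentsBelowEquiv k).trans
    Set.powersetCard.ofFinEmbEquiv)), Set.powersetCard.card, Nat.card_eq_fintype_card,
    Fintype.card_fin]

end Equiv.Perm

theorem pow_eq_sum_perm_choose (n k : ℕ) :
    k ^ n = ∑ σ : Equiv.Perm (Fin n), (k + σ.ascentsBelow n).choose n := by
  have hcard : Nat.card (Fin n → Fin k) = k ^ n := by simp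
  rw [← hcard, Nat.card_congr (Equiv.sigmaFiberEquiv (Tuple.sort (α := Fin k))).symm,
    Nat.card_sigma]
  exact sum_congr rfl fun σ _ => σ.card_sort_fiber k

theorem A_eq_card_ascentsBelow_eq (i j : ℕ) :
    A i j = #{σ : Equiv.Perm (Fin i) | σ.ascentsBelow i = j} := by
  rw [A, Fintype.card_subtype]
  congr! 3 with σ
  rw [Equiv.Perm.ascentsBelow, card_filter, card_filter, ← Fin.sum_univ_eq_sum_range]
  refine sum_congr rfl fun x _ => if_congr ?_ rfl rfl
  constructor <;> rintro ⟨h, h'⟩ <;> refine ⟨h, ?_⟩ <;> simpa only [Nat.mod_eq_of_lt h] using h'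

theorem stmt18 (i k : ℕ) :
    k ^ i = ∑ j ∈ Finset.range (i + 1), A i j * (k + j).choose i := by
  rw [pow_eq_sum_perm_choose, ← sum_fiberwise_of_maps_to' (t := range (i + 1))
    (g := fun σ : Equiv.Perm (Fin i) => σ.ascentsBelow i)
    (fun σ _ => mem_range.2 (Nat.lt_succ_of_le (σ.ascentsBelow_le i))) fun j => (k + j).choose i]
  simp only [A_eq_card_ascentsBelow_eq, sum_const, smul_eq_mul]
end
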